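/- Assume (C1), (C2), (C3), (C4), that max_{[0,1]} f' < inf_Ω 𝒥^δ, and that J ∈ 𝔹^α_{1,∞}(Ω;δ) for some α ∈ (0,1). Let u(t,x) be the unique entire solution of ∂_t u = Lu + f(u) on ℝ × closure(Ω) with 0 < u < 1, ∂_t u > 0 and |u(t,x) − φ(x₁ + ct)| → 0 as t → −∞ uniformly in x ∈ closure(Ω). Then, writing x = (x₁, x') ∈ ℝ × ℝ^{N−1}, for every fixed (t, x') ∈ ℝ × ℝ^{N−1} one has u(t,x) → 0 as x₁ → −∞ and u(t,x) → 1 as x₁ → +∞. -/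

import Mathlib

open MeasureTheory Filter Topology Set RealInnerProductSpace

noncomputable section

abbrev Euc (N : ℕ) := EuclideanSpace ℝ (Fin N)

/-- The nonlocal diffusion operator `Lu(x) = ∫_Ω J(δ(x,y)) (u(y) - u(x)) dy`. -/
def nlOp {N : ℕ} (Ω : Set (Euc N)) (J : ℝ → ℝ)
    (δ : Euc N → Euc N → ℝ) (u : Euc N → ℝ) (x : Euc N) : ℝ :=
  ∫ y in Ω, J (δ x y) * (u y - u x)

/-- First coordinate of a point of `ℝ^N`. -/
def coord1 {N : ℕ} (hN : 0 < N) (x : Euc N) : ℝ := x ⟨0, hN⟩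

/-- Build a point of `ℝ^N` from a first coordinate and a point of `ℝ^{N-1}`. -/
def withFirst (N : ℕ) (s : ℝ) (x' : Euc (N - 1)) : Euc N := WithLp.toLp 2 fun i : Fin N =>
  if h : (i : ℕ) = 0 then s else x' ⟨(i : ℕ) - 1, by have := i.isLt; omega⟩

/-- A quasi-Euclidean distance on a set `E ⊆ ℝ^N`. -/
structure IsQuasiEuclidean {N : ℕ} (E : Set (Euc N)) (δ : Euc N → Euc N → ℝ) : Prop where
  symm : ∀ x ∈ E, ∀ y ∈ E, δ x y = δ y x
  eq_zero_iff : ∀ x ∈ E, ∀ y ∈ E, (δ x y = 0 ↔ x = y)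
  triangle : ∀ x ∈ E, ∀ y ∈ E, ∀ z ∈ E, δ x z ≤ δ x y + δ y z
  eq_of_segment : ∀ x ∈ E, ∀ y ∈ E, segment ℝ x y ⊆ E → δ x y = ‖x - y‖
  ge_eucl : ∀ x ∈ E, ∀ y ∈ E, ‖x - y‖ ≤ δ x y

/-- `δ` coincides with the Euclidean distance on `E`. -/
def IsEuclideanOn {N : ℕ} (E : Set (Euc N)) (δ : Euc N → Euc N → ℝ) : Prop :=
  ∀ x ∈ E, ∀ y ∈ E, δ x y = ‖x - y‖

/-- Hypothesis (C1): `K` compact, `Ω = ℝ^N \ K` connected, `δ` quasi-Euclidean on `closure Ω`. -/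
structure C1 {N : ℕ} (K : Set (Euc N)) (δ : Euc N → Euc N → ℝ) : Prop where
  cpt : IsCompact K
  conn : IsConnected Kᶜ
  quasi : IsQuasiEuclidean (closure Kᶜ) δ

/-- Hypothesis (C2): `f` is a bistable nonlinearity with derivative `f'`. -/
structure C2 (f f' : ℝ → ℝ) (θ : ℝ) : Prop where
  θ_mem : θ ∈ Ioo (0:ℝ) 1
  f0 : f 0 = 0
  fθ : f θ = 0
  f1 : f 1 = 0
  neg_on : ∀ s ∈ Ioo 0 θ, f s < 0
  pos_on : ∀ s ∈ Ioo θ 1, 0 < f s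
  hasDeriv : ∀ s ∈ Icc (0:ℝ) 1, HasDerivAt f (f' s) s
  lipschitz_deriv : ∃ C : NNReal, LipschitzOnWith C f' (Icc 0 1)
  d0 : f' 0 < 0
  dθ : 0 < f' θ
  d1 : f' 1 < 0

/-- The iterated sets `Π_j(J,x)`. -/
def PiIter {N : ℕ} (Ω : Set (Euc N)) (J : ℝ → ℝ)
    (δ : Euc N → Euc N → ℝ) (x : Euc N) : ℕ → Set (Euc N)
  | 0 => {x}
  | j + 1 => ⋃ z ∈ PiIter Ω J δ x j, (closure Ω ∩ Function.support fun y => J (δ y z))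

/-- The `J`-covering property of `(Ω, δ)`. -/
def JCovering {N : ℕ} (Ω : Set (Euc N)) (J : ℝ → ℝ) (δ : Euc N → Euc N → ℝ) : Prop :=
  ∀ x ∈ closure Ω, closure Ω = ⋃ j, PiIter Ω J δ x j

/-- Hypothesis (C3) on the kernel `J`. -/
structure C3 {N : ℕ} (Ω : Set (Euc N)) (J : ℝ → ℝ) (δ : Euc N → Euc N → ℝ) : Prop where
  nonneg : ∀ r, 0 ≤ J r
  meas : Measurable J
  cptSupp : ∃ R : ℝ, Function.support J ⊆ Icc 0 R
  suppPos : 0 < volume (Function.support J)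
  covering : JCovering Ω J δ
  unitMass : (∫ z : Euc N, J ‖z‖) = 1
  l1cont : ∀ x₁ ∈ closure Ω,
      Tendsto (fun x₂ : Euc N => ∫ y in Ω, |J (δ x₂ y) - J (δ x₁ y)|) (𝓝[closure Ω] x₁) (𝓝 0)
  jdeltaBdd : ∃ C : ℝ, ∀ x ∈ Ω, (∫ z in Ω, J (δ x z)) ≤ C

/-- The one-dimensional kernel `J₁(z) = ∫_{ℝ^{N-1}} J(|(z,y')|) dy'`. -/
def J1 (N : ℕ) (J : ℝ → ℝ) : ℝ → ℝ :=
  fun z => ∫ y' : Euc (N - 1), J (Real.sqrt (z ^ 2 + ‖y'‖ ^ 2))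

/-- Hypothesis (C4): `(φ, c)` is an increasing planar travelling wave profile. -/
structure C4 (N : ℕ) (J f : ℝ → ℝ) (φ φ' : ℝ → ℝ) (c : ℝ) : Prop where
  cpos : 0 < c
  mono : StrictMono φ
  hasDeriv : ∀ z, HasDerivAt φ (φ' z) z
  eqn : ∀ z, c * φ' z = (∫ h : ℝ, J1 N J h * φ (z - h)) - φ z + f (φ z)
  lim0 : Tendsto φ atBot (𝓝 (0:ℝ))
  lim1 : Tendsto φ atTop (𝓝 (1:ℝ))

/-- `z ↦ J(|z|)` belongs to `W^{1,1}(ℝ^N)` (weak-derivative formulation). -/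
def MemW11 (N : ℕ) (J : ℝ → ℝ) : Prop :=
  Integrable (fun z : Euc N => J ‖z‖) ∧
  ∃ g : Euc N → Euc N,
    Integrable (fun z => ‖g z‖) ∧
    ∀ ψ : Euc N → ℝ, ContDiff ℝ (⊤ : ℕ∞) ψ → HasCompactSupport ψ →
      ∀ v : Euc N, (∫ z, J ‖z‖ * fderiv ℝ ψ z v) = -∫ z, ψ z * ⟪g z, v⟫

/-- Hypothesis (C5). -/
structure C5 (N : ℕ) (J f f' : ℝ → ℝ) : Prop where
  w11 : MemW11 N J
  maxderiv : ∀ s ∈ Icc (0:ℝ) 1, f' s < 1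
  posmass : 0 < ∫ s in (0:ℝ)..1, f s

/-- `g ∈ 𝔹^α_{1,∞}(Ω;δ)`. -/
def MemBesov {N : ℕ} (Ω : Set (Euc N)) (δ : Euc N → Euc N → ℝ) (α : ℝ) (g : ℝ → ℝ) : Prop :=
  Integrable (fun z : Euc N => g ‖z‖) ∧
  ∃ C : ℝ, ∀ x₁ ∈ Ω, ∀ x₂ ∈ Ω, x₁ ≠ x₂ →
    (∫ y in Ω, |g (δ x₁ y) - g (δ x₂ y)|) ≤ C * ‖x₁ - x₂‖ ^ α

/-- `max_{[0,1]} f' < inf_Ω 𝒥^δ`. -/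
def FJCond {N : ℕ} (Ω : Set (Euc N)) (J f' : ℝ → ℝ) (δ : Euc N → Euc N → ℝ) : Prop :=
  ∃ m : ℝ, (∀ s ∈ Icc (0:ℝ) 1, f' s < m) ∧ ∀ x ∈ Ω, m ≤ ∫ z in Ω, J (δ x z)

/-- `max_ℝ f' < inf_Ω 𝒥^δ`. -/
def FJCondAll {N : ℕ} (Ω : Set (Euc N)) (J f' : ℝ → ℝ) (δ : Euc N → Euc N → ℝ) : Prop :=
  ∃ m : ℝ, (∀ s : ℝ, f' s < m) ∧ ∀ x ∈ Ω, m ≤ ∫ z in Ω, J (δ x z)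

/-- `u` is an entire (classical) solution of `∂ₜ u = Lu + f(u)` on `ℝ × closure Ω`. -/
def EntireSol {N : ℕ} (Ω : Set (Euc N)) (J : ℝ → ℝ) (δ : Euc N → Euc N → ℝ)
    (f : ℝ → ℝ) (u : ℝ → Euc N → ℝ) : Prop :=
  ∀ t : ℝ, ∀ x ∈ closure Ω, HasDerivAt (fun s => u s x) (nlOp Ω J δ (u t) x + f (u t x)) t

/-- `u` is bounded on `ℝ × closure Ω`. -/
def BoundedOn {N : ℕ} (Ω : Set (Euc N)) (u : ℝ → Euc N → ℝ) : Prop :=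
  ∃ M : ℝ, ∀ t : ℝ, ∀ x ∈ closure Ω, |u t x| ≤ M

/-- `u ∈ C²(ℝ, C^{0,α}(closure Ω))`. -/
def TimeC2SpaceHolder {N : ℕ} (Ω : Set (Euc N)) (α : ℝ) (u : ℝ → Euc N → ℝ) : Prop :=
  (∀ x ∈ closure Ω, ContDiff ℝ 2 fun t => u t x) ∧
  ∀ t : ℝ, ∃ C : ℝ, ∀ x ∈ closure Ω, ∀ y ∈ closure Ω, |u t x - u t y| ≤ C * ‖x - y‖ ^ α

/-- `0 < u < 1` on `ℝ × closure Ω`. -/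
def StrictBetween01 {N : ℕ} (Ω : Set (Euc N)) (u : ℝ → Euc N → ℝ) : Prop :=
  ∀ t : ℝ, ∀ x ∈ closure Ω, 0 < u t x ∧ u t x < 1

/-- `∂ₜ u > 0` on `ℝ × closure Ω`. -/
def TimeStrictMono {N : ℕ} (Ω : Set (Euc N)) (u : ℝ → Euc N → ℝ) : Prop :=
  ∀ t : ℝ, ∀ x ∈ closure Ω, 0 < deriv (fun s => u s x) t

/-- `|u(t,x) - φ(x₁ + c t)| → 0` as `t → -∞`, uniformly in `x ∈ closure Ω`. -/
def UnifWaveLimitAtBot {N : ℕ} (hN : 0 < N) (Ω : Set (Euc N)) (φ : ℝ → ℝ) (c : ℝ)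
    (u : ℝ → Euc N → ℝ) : Prop :=
  ∀ ε > 0, ∃ T : ℝ, ∀ t ≤ T, ∀ x ∈ closure Ω, |u t x - φ (coord1 hN x + c * t)| ≤ ε

/-- `|u(t,x) - φ(x₁ + c t)| → 0` as `t → -∞`, locally uniformly in `x ∈ closure Ω`. -/
def LocWaveLimitAtBot {N : ℕ} (hN : 0 < N) (Ω : Set (Euc N)) (φ : ℝ → ℝ) (c : ℝ)
    (u : ℝ → Euc N → ℝ) : Prop :=
  ∀ ε > 0, ∀ R : ℝ, ∃ T : ℝ, ∀ t ≤ T, ∀ x ∈ closure Ω, ‖x‖ ≤ R →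
    |u t x - φ (coord1 hN x + c * t)| ≤ ε

/-- `|u(t,x) - φ(x₁ + c t)| → 0` as `t → +∞`, locally uniformly in `x ∈ closure Ω`. -/
def LocWaveLimitAtTop {N : ℕ} (hN : 0 < N) (Ω : Set (Euc N)) (φ : ℝ → ℝ) (c : ℝ)
    (u : ℝ → Euc N → ℝ) : Prop :=
  ∀ ε > 0, ∀ R : ℝ, ∃ T : ℝ, ∀ t ≥ T, ∀ x ∈ closure Ω, ‖x‖ ≤ R →
    |u t x - φ (coord1 hN x + c * t)| ≤ ε

/-- `|u(t,x) - w(x) φ(x₁ + c t)| → 0` as `t → +∞`, locally uniformly in `x ∈ closure Ω`. -/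
def LocProdLimitAtTop {N : ℕ} (hN : 0 < N) (Ω : Set (Euc N)) (φ : ℝ → ℝ) (c : ℝ)
    (w : Euc N → ℝ) (u : ℝ → Euc N → ℝ) : Prop :=
  ∀ ε > 0, ∀ R : ℝ, ∃ T : ℝ, ∀ t ≥ T, ∀ x ∈ closure Ω, ‖x‖ ≤ R →
    |u t x - w x * φ (coord1 hN x + c * t)| ≤ ε

/-- `w` solves the stationary problem (P∞): `Lw + f(w) = 0` in `closure Ω`,
`0 < w ≤ 1`, and `w(x) → 1` as `|x| → ∞`. -/
def StationarySol {N : ℕ} (Ω : Set (Euc N)) (J : ℝ → ℝ) (δ : Euc N → Euc N → ℝ)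
    (f : ℝ → ℝ) (w : Euc N → ℝ) : Prop :=
  ContinuousOn w (closure Ω) ∧
  (∀ x ∈ closure Ω, nlOp Ω J δ w x + f (w x) = 0) ∧
  (∀ x ∈ closure Ω, 0 < w x ∧ w x ≤ 1) ∧
  ∀ ε > 0, ∃ R : ℝ, ∀ x ∈ closure Ω, R ≤ ‖x‖ → |w x - 1| ≤ ε

/-- Regularity `u ∈ C²([t₀,∞), C(Ω))` of a solution of the Cauchy problem,
with time-derivatives `u'`, `u''`. -/
def CauchyReg {N : ℕ} (Ω : Set (Euc N)) (t₀ : ℝ) (u u' u'' : ℝ → Euc N → ℝ) : Prop :=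
  (∀ x ∈ Ω, ∀ t ∈ Ici t₀, HasDerivWithinAt (fun s => u s x) (u' t x) (Ici t₀) t) ∧
  (∀ x ∈ Ω, ∀ t ∈ Ici t₀, HasDerivWithinAt (fun s => u' s x) (u'' t x) (Ici t₀) t) ∧
  (∀ x ∈ Ω, ContinuousOn (fun s => u'' s x) (Ici t₀)) ∧
  ∀ t ∈ Ici t₀, ContinuousOn (u t) Ω

/-- `u` solves the Cauchy problem with initial datum `u₀` at time `t₀`. -/
def CauchySol {N : ℕ} (Ω : Set (Euc N)) (J : ℝ → ℝ) (δ : Euc N → Euc N → ℝ)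
    (f : ℝ → ℝ) (t₀ : ℝ) (u₀ : Euc N → ℝ) (u u' : ℝ → Euc N → ℝ) : Prop :=
  (∀ t ∈ Ici t₀, ∀ x ∈ Ω, u' t x = nlOp Ω J δ (u t) x + f (u t x)) ∧
  ∀ x ∈ Ω, u t₀ x = u₀ x

end

/-! As `x₁ → +∞` the limit follows from monotonicity in time: `u(t, x) ≥ u(T, x) ≈ φ(x₁ + cT)`
for `T ≤ t` very negative.

As `x₁ → -∞`, let `m(t) = limsup_{x₁ → -∞} u(t, x)`. Far from the compact obstacle, `δ` is
Euclidean on the support of `J` and `∫_Ω J(|x - y|) dy = 1`, so `Lu(x) ≤ sup_{B_R(x)} u - u(x)`.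
This gives `∂ₜu ≤ 1 + max f`, hence (with `∂ₜu > 0`) `m` is Lipschitz, and `m(T) → 0` as
`T → -∞` by the wave asymptotics. If `m(t) = β ∈ (0, θ)`, pick a far-left `x` with
`u(t, x) ≈ β` and `u(t, ·) ≤ β + κ` on `B_R(x)`: then `∂ₜu(t, x) ≤ 2κ + f(u(t, x)) < 0`,
a contradiction. So `m` avoids `(0, θ)`, and being continuous and small at `-∞` it vanishes. -/

open Metric
open scoped NNReal

lemma coord1_withFirst {N : ℕ} (hN : 0 < N) (s : ℝ) (x' : Euc (N - 1)) :
    coord1 hN (withFirst N s x') = s := by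
  simp [coord1, withFirst]

lemma lipschitzWith_coord1 {N : ℕ} (hN : 0 < N) : LipschitzWith 1 (coord1 hN) :=
  LipschitzWith.of_dist_le_mul fun x y => by simpa [coord1] using PiLp.dist_apply_le x y ⟨0, hN⟩

lemma comap_coord1_le_cocompact {N : ℕ} (hN : 0 < N) {l : Filter ℝ} (hl : l ≤ cocompact ℝ) :
    comap (coord1 hN) l ≤ cocompact (Euc N) :=
  (comap_mono hl).trans (comap_cocompact_le (lipschitzWith_coord1 hN).continuous)

lemma tendsto_withFirst_comap_coord1 {N : ℕ} (hN : 0 < N) (l : Filter ℝ) (x' : Euc (N - 1)) :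
    Tendsto (withFirst N · x') l (comap (coord1 hN) l) :=
  tendsto_comap_iff.2 <| by simp only [Function.comp_def, coord1_withFirst]; exact tendsto_id

lemma eventually_closedBall_subset_compl {X : Type*} [PseudoMetricSpace X] [ProperSpace X]
    {K : Set X} (hK : IsCompact K) (R : ℝ) : ∀ᶠ x in cocompact X, closedBall x R ⊆ Kᶜ := by
  filter_upwards [(hK.cthickening (r := R)).compl_mem_cocompact] with x hx y hy hyK
  exact hx (mem_cthickening_of_dist_le x y R K hyK (mem_closedBall'.1 hy))

lemma eventually_forall_closedBall_comap_atBot {X : Type*} [PseudoMetricSpace X] {p : X → ℝ}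
    (hp : LipschitzWith 1 p) (R : ℝ) {P : X → Prop} (h : ∀ᶠ y in comap p atBot, P y) :
    ∀ᶠ x in comap p atBot, ∀ y ∈ closedBall x R, P y := by
  rw [(atBot_basis.comap p).eventually_iff] at h ⊢
  obtain ⟨a, -, ha⟩ := h
  refine ⟨a - R, trivial, fun x hx y hy => ha ?_⟩
  have hpy := (abs_le.1 (hp.dist_le_mul y x)).2
  simp only [mem_preimage, mem_Iic, NNReal.coe_one, one_mul] at hx hpy ⊢
  linarith [mem_closedBall.1 hy]

lemma lipschitzWith_limsup {X : Type*} {F : Filter X} [F.NeBot] {u : ℝ → X → ℝ} {a b : ℝ}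
    {Λ : ℝ≥0} (hbdd : ∀ t, ∀ᶠ x in F, u t x ∈ Icc a b)
    (hinc : ∀ s t, s ≤ t → ∀ᶠ x in F, u s x ≤ u t x ∧ u t x ≤ u s x + Λ * (t - s)) :
    LipschitzWith Λ fun t => limsup (u t) F := by
  have hcob t : IsCoboundedUnder (· ≤ ·) F (u t) :=
    isCoboundedUnder_le_of_eventually_le F ((hbdd t).mono fun _ hx => hx.1)
  have hbd t : IsBoundedUnder (· ≤ ·) F (u t) :=
    isBoundedUnder_of_eventually_le ((hbdd t).mono fun _ hx => hx.2)
  refine LipschitzWith.of_le_add_mul Λ fun t s => ?_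
  rcases le_total s t with hst | hts
  · have hbd' : IsBoundedUnder (· ≤ ·) F fun x => u s x + Λ * (t - s) :=
      isBoundedUnder_of_eventually_le ((hbdd s).mono fun _ hx => add_le_add_left hx.2 _)
    calc limsup (u t) F ≤ limsup (fun x => u s x + Λ * (t - s)) F :=
          limsup_le_limsup ((hinc s t hst).mono fun _ hx => hx.2) (hcob t) hbd'
      _ = limsup (u s) F + Λ * (t - s) := limsup_add_const F _ _ (hbd s) (hcob s)
      _ ≤ limsup (u s) F + Λ * dist t s := by
          gcongr
          exact Real.dist_eq t s ▸ le_abs_self _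
  · calc limsup (u t) F ≤ limsup (u s) F :=
          limsup_le_limsup ((hinc t s hts).mono fun _ hx => hx.1) (hcob t) (hbd s)
      _ ≤ limsup (u s) F + Λ * dist t s := le_add_of_nonneg_right (by positivity)

lemma le_zero_of_forall_notMem_Ioo {m : ℝ → ℝ} {θ : ℝ} (hm : Continuous m) (hθ : 0 < θ)
    (hsmall : ∀ β > 0, ∃ T, m T < β) (hgap : ∀ t, m t ∉ Ioo 0 θ) (t : ℝ) : m t ≤ 0 := by
  by_contra! ht
  have hβ : 0 < min (m t) θ / 2 := by positivity
  obtain ⟨T, hT⟩ := hsmall _ hβ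
  have hβt : min (m t) θ / 2 ≤ m t := by linarith [min_le_left (m t) θ]
  obtain ⟨s, -, hs⟩ := intermediate_value_uIcc (a := T) (b := t) hm.continuousOn
    (mem_uIcc_of_le hT.le hβt)
  exact hgap s (hs ▸ ⟨hβ, by linarith [min_le_right (m t) θ]⟩)

section FarFromObstacle

variable {N : ℕ} {Ω : Set (Euc N)} {δ : Euc N → Euc N → ℝ} {J : ℝ → ℝ} {R : ℝ} {x : Euc N}

lemma C3.exists_radius (h3 : C3 Ω J δ) : ∃ R, 0 ≤ R ∧ ∀ r, R < r → J r = 0 := by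
  obtain ⟨R, hR⟩ := h3.cptSupp
  refine ⟨max R 0, le_max_right _ _, fun r hr => Function.notMem_support.1 fun hJ => ?_⟩
  exact (hR hJ).2.not_gt ((le_max_left _ _).trans_lt hr)

lemma kernel_eq_of_closedBall_subset (hδ : IsQuasiEuclidean (closure Ω) δ)
    (hJR : ∀ r, R < r → J r = 0) (hR : 0 ≤ R) (hx : closedBall x R ⊆ Ω) {y : Euc N}
    (hy : y ∈ Ω) : J (δ x y) = J ‖x - y‖ := by
  have hxΩ : x ∈ closure Ω := subset_closure (hx (mem_closedBall_self hR))
  by_cases hxy : ‖x - y‖ ≤ R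
  · have hseg : segment ℝ x y ⊆ closure Ω :=
      ((convex_closedBall x R).segment_subset (mem_closedBall_self hR)
        (mem_closedBall'.2 (dist_eq_norm x y ▸ hxy))).trans (hx.trans subset_closure)
    rw [hδ.eq_of_segment x hxΩ y (subset_closure hy) hseg]
  · rw [not_le] at hxy
    rw [hJR _ hxy, hJR _ (hxy.trans_le (hδ.ge_eucl x hxΩ y (subset_closure hy)))]

lemma setIntegral_kernel_eq_one (hJR : ∀ r, R < r → J r = 0)
    (hmass : ∫ z : Euc N, J ‖z‖ = 1) (hx : closedBall x R ⊆ Ω) :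
    ∫ y in Ω, J ‖x - y‖ = 1 := by
  refine (setIntegral_eq_integral_of_forall_compl_eq_zero fun y hy => hJR _ ?_).trans ?_
  · exact lt_of_not_ge fun hxy => hy (hx (mem_closedBall'.2 (dist_eq_norm x y ▸ hxy)))
  · rw [integral_sub_left_eq_self (fun z => J ‖z‖) volume x, hmass]

lemma nlOp_le_of_le (hδ : IsQuasiEuclidean (closure Ω) δ) (hJnn : ∀ r, 0 ≤ J r)
    (hJR : ∀ r, R < r → J r = 0) (hR : 0 ≤ R) (hmass : ∫ z : Euc N, J ‖z‖ = 1)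
    (hΩ : MeasurableSet Ω) (hx : closedBall x R ⊆ Ω) {g : Euc N → ℝ} {B : ℝ}
    (hg : ∀ y ∈ closedBall x R, g y ≤ B) : nlOp Ω J δ g x ≤ B - g x := by
  have hint : IntegrableOn (fun y => J ‖x - y‖) Ω :=
    ((Integrable.of_integral_ne_zero (hmass ▸ one_ne_zero)).comp_sub_left x).integrableOn
  have hmean : ∫ y in Ω, J ‖x - y‖ * (B - g x) = B - g x := by
    rw [integral_mul_const, setIntegral_kernel_eq_one hJR hmass hx, one_mul]
  have hpt : ∀ y ∈ Ω, J (δ x y) * (g y - g x) ≤ J ‖x - y‖ * (B - g x) := by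
    intro y hy
    rw [kernel_eq_of_closedBall_subset hδ hJR hR hx hy]
    by_cases hxy : ‖x - y‖ ≤ R
    · exact mul_le_mul_of_nonneg_left
        (sub_le_sub_right (hg y (mem_closedBall'.2 (dist_eq_norm x y ▸ hxy))) _) (hJnn _)
    · simp [hJR _ (not_le.1 hxy)]
  by_cases hF : IntegrableOn (fun y => J (δ x y) * (g y - g x)) Ω
  · exact hmean ▸ setIntegral_mono_on hF (hint.mul_const _) hΩ hpt
  · rw [nlOp, integral_undef hF]
    exact sub_nonneg.2 (hg x (mem_closedBall_self hR))

end FarFromObstacle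

instance comap_coord1_atBot_neBot {N : ℕ} (hN : 0 < N) : (comap (coord1 hN) atBot).NeBot :=
  atBot_neBot.comap_of_surj fun s => ⟨withFirst N s 0, coord1_withFirst hN s 0⟩

section EntireSolution

variable {N : ℕ} (hN : 0 < N) {K : Set (Euc N)} {δ : Euc N → Euc N → ℝ} {J f : ℝ → ℝ}
  {u : ℝ → Euc N → ℝ} {R : ℝ}

lemma continuous_limsup_comap_coord1_atBot
    (hL : ∀ x, closedBall x R ⊆ Kᶜ → ∀ (g : Euc N → ℝ) (B : ℝ),
      (∀ y ∈ closedBall x R, g y ≤ B) → nlOp Kᶜ J δ g x ≤ B - g x)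
    (hR : 0 ≤ R) (hball : ∀ᶠ x in comap (coord1 hN) atBot, closedBall x R ⊆ Kᶜ)
    (hf : ContinuousOn f (Icc 0 1)) (hu : EntireSol Kᶜ J δ f u) (hu01 : StrictBetween01 Kᶜ u)
    (hmono : TimeStrictMono Kᶜ u) :
    Continuous fun t => limsup (u t) (comap (coord1 hN) atBot) := by
  obtain ⟨M, hM⟩ := isCompact_Icc.exists_bound_of_continuousOn hf
  have hM0 : 0 ≤ M := (norm_nonneg _).trans (hM 0 ⟨le_rfl, zero_le_one⟩)
  have hcl : ∀ x, closedBall x R ⊆ Kᶜ → x ∈ closure Kᶜ := fun x hx =>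
    subset_closure (hx (mem_closedBall_self hR))
  have hderiv : ∀ x, closedBall x R ⊆ Kᶜ → ∀ r, deriv (u · x) r ≤ 1 + M := by
    intro x hx r
    have hLu := hL x hx (u r) 1 fun y hy => (hu01 r y (subset_closure (hx hy))).2.le
    have hfu := (le_abs_self _).trans (hM _ (Ioo_subset_Icc_self (hu01 r x (hcl x hx))))
    rw [(hu r x (hcl x hx)).deriv]
    linarith [(hu01 r x (hcl x hx)).1]
  refine (lipschitzWith_limsup (Λ := ⟨1 + M, by positivity⟩) (a := 0) (b := 1)
    (fun t => hball.mono fun x hx => Ioo_subset_Icc_self (hu01 t x (hcl x hx)))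
    fun s t hst => hball.mono fun x hx => ⟨?_, ?_⟩).continuous
  · exact (strictMono_of_deriv_pos fun r => hmono r x (hcl x hx)).monotone hst
  · have := image_sub_le_mul_sub_of_deriv_le
      (fun r => (hu r x (hcl x hx)).differentiableAt) (hderiv x hx) hst
    exact (by linarith : u t x ≤ u s x + (1 + M) * (t - s))

lemma limsup_comap_coord1_atBot_notMem_Ioo {f' : ℝ → ℝ} {θ : ℝ} (h2 : C2 f f' θ)
    (hL : ∀ x, closedBall x R ⊆ Kᶜ → ∀ (g : Euc N → ℝ) (B : ℝ),
      (∀ y ∈ closedBall x R, g y ≤ B) → nlOp Kᶜ J δ g x ≤ B - g x)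
    (hR : 0 ≤ R) (hball : ∀ᶠ x in comap (coord1 hN) atBot, closedBall x R ⊆ Kᶜ)
    (hu : EntireSol Kᶜ J δ f u) (hu01 : StrictBetween01 Kᶜ u) (hmono : TimeStrictMono Kᶜ u)
    (t : ℝ) : limsup (u t) (comap (coord1 hN) atBot) ∉ Ioo 0 θ := by
  set F := comap (coord1 hN) atBot
  set β := limsup (u t) F
  rintro ⟨hβ0, hβθ⟩
  have hcl : ∀ x, closedBall x R ⊆ Kᶜ → x ∈ closure Kᶜ := fun x hx =>
    subset_closure (hx (mem_closedBall_self hR))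
  have hfβ : f β < 0 := h2.neg_on β ⟨hβ0, hβθ⟩
  obtain ⟨κ₀, hκ₀, hfκ₀⟩ := Metric.continuousAt_iff.1
    (h2.hasDeriv β ⟨hβ0.le, hβθ.le.trans h2.θ_mem.2.le⟩).continuousAt (-f β / 2) (by linarith)
  set κ := min κ₀ (-f β / 4)
  have hκ : 0 < κ := lt_min hκ₀ (by linarith)
  have hbdd : IsBoundedUnder (· ≤ ·) F (u t) := isBoundedUnder_of_eventually_le
    (hball.mono fun x hx => (hu01 t x (hcl x hx)).2.le)
  have hcobdd : IsCoboundedUnder (· ≤ ·) F (u t) := isCoboundedUnder_le_of_eventually_le F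
    (hball.mono fun x hx => (hu01 t x (hcl x hx)).1.le)
  have hup : ∀ᶠ y in F, u t y < β + κ := eventually_lt_of_limsup_lt (by linarith) hbdd
  have hlow : ∃ᶠ x in F, β - κ < u t x := frequently_lt_of_lt_limsup hcobdd (by linarith)
  obtain ⟨x, hxβ, hx, hxup⟩ := (hlow.and_eventually (hball.and
    (eventually_forall_closedBall_comap_atBot (lipschitzWith_coord1 hN) R hup))).exists
  have hLu := hL x hx (u t) (β + κ) fun y hy => (hxup y hy).le
  have hfx : |f (u t x) - f β| < -f β / 2 := hfκ₀ (abs_sub_lt_iff.2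
    ⟨by linarith [hxup x (mem_closedBall_self hR), min_le_left κ₀ (-f β / 4)],
      by linarith [min_le_left κ₀ (-f β / 4)]⟩)
  have hpos := hmono t x (hcl x hx)
  rw [(hu t x (hcl x hx)).deriv] at hpos
  linarith [(abs_lt.1 hfx).2, min_le_right κ₀ (-f β / 4)]

lemma exists_limsup_comap_coord1_atBot_lt {Ω : Set (Euc N)} {φ : ℝ → ℝ} {c : ℝ}
    (hulim : UnifWaveLimitAtBot hN Ω φ c u) (hφ : Tendsto φ atBot (𝓝 0))
    (hcl : ∀ᶠ x in comap (coord1 hN) atBot, x ∈ closure Ω) (hu01 : StrictBetween01 Ω u)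
    {β : ℝ} (hβ : 0 < β) : ∃ T, limsup (u T) (comap (coord1 hN) atBot) < β := by
  obtain ⟨T, hT⟩ := hulim (β / 4) (by positivity)
  refine ⟨T, (limsup_le_of_le ?_ ?_).trans_lt (half_lt_self hβ)⟩
  · exact isCoboundedUnder_le_of_eventually_le _ (hcl.mono fun x hx => (hu01 T x hx).1.le)
  · have hφT : ∀ᶠ x in comap (coord1 hN) atBot, φ (coord1 hN x + c * T) < β / 4 :=
      (hφ.comp (tendsto_atBot_add_const_right _ (c * T) tendsto_comap)).eventually_lt_const
        (by positivity)
    filter_upwards [hcl, hφT] with x hx hφx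
    linarith [(abs_le.1 (hT T le_rfl x hx)).2]

lemma tendsto_withFirst_atTop_of_unifWaveLimitAtBot (hK : IsCompact K) {φ : ℝ → ℝ} {c : ℝ}
    (hulim : UnifWaveLimitAtBot hN Kᶜ φ c u) (hφ : Tendsto φ atTop (𝓝 1))
    (hu01 : StrictBetween01 Kᶜ u) (hmono : TimeStrictMono Kᶜ u) (t : ℝ) (x' : Euc (N - 1)) :
    Tendsto (fun s => u t (withFirst N s x')) atTop (𝓝 1) := by
  have hfar : ∀ᶠ s in atTop, withFirst N s x' ∈ closure Kᶜ :=
    (((tendsto_withFirst_comap_coord1 hN atTop x').mono_right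
      (comap_coord1_le_cocompact hN atTop_le_cocompact)).eventually
        hK.compl_mem_cocompact).mono fun _ hs => subset_closure hs
  refine tendsto_order.2
    ⟨fun a ha => ?_, fun a ha => hfar.mono fun s hs => (hu01 t _ hs).2.trans ha⟩
  obtain ⟨T, hT⟩ := hulim ((1 - a) / 2) (by linarith)
  have hφs : ∀ᶠ s in atTop, 1 - (1 - a) / 2 < φ (s + c * min t T) :=
    (hφ.comp (tendsto_atTop_add_const_right _ _ tendsto_id)).eventually_const_lt (by linarith)
  filter_upwards [hfar, hφs] with s hs hφs
  have hwave := (abs_le.1 (hT (min t T) (min_le_right t T) _ hs)).1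
  rw [coord1_withFirst] at hwave
  have hinc := (strictMono_of_deriv_pos fun r => hmono r _ hs).monotone (min_le_left t T)
  linarith

end EntireSolution

theorem limits_in_first_coordinate_general
    {N : ℕ} (hN : 0 < N) (K Ω : Set (Euc N)) (hΩ : Ω = Kᶜ)
    (δ : Euc N → Euc N → ℝ) (J f f' : ℝ → ℝ) (θ : ℝ)
    (φ φ' : ℝ → ℝ) (c : ℝ)
    (h1 : C1 K δ) (h2 : C2 f f' θ) (h3 : C3 Ω J δ) (h4 : C4 N J f φ φ' c)
    (u : ℝ → Euc N → ℝ)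
    (hu : EntireSol Ω J δ f u)
    (hu01 : StrictBetween01 Ω u)
    (hmono : TimeStrictMono Ω u)
    (hulim : UnifWaveLimitAtBot hN Ω φ c u) :
    ∀ t : ℝ, ∀ x' : Euc (N - 1),
      Filter.Tendsto (fun s => u t (withFirst N s x')) Filter.atBot (nhds 0) ∧
      Filter.Tendsto (fun s => u t (withFirst N s x')) Filter.atTop (nhds 1) := by
  subst hΩ
  set F := comap (coord1 hN) atBot
  obtain ⟨R, hR, hJR⟩ := h3.exists_radius
  have hL : ∀ x, closedBall x R ⊆ Kᶜ → ∀ (g : Euc N → ℝ) (B : ℝ),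
      (∀ y ∈ closedBall x R, g y ≤ B) → nlOp Kᶜ J δ g x ≤ B - g x := fun x hx _ _ hg =>
    nlOp_le_of_le h1.quasi h3.nonneg hJR hR h3.unitMass h1.cpt.isClosed.measurableSet.compl hx hg
  have hball : ∀ᶠ x in F, closedBall x R ⊆ Kᶜ :=
    comap_coord1_le_cocompact hN atBot_le_cocompact (eventually_closedBall_subset_compl h1.cpt R)
  have hcl : ∀ᶠ x in F, x ∈ closure Kᶜ :=
    hball.mono fun x hx => subset_closure (hx (mem_closedBall_self hR))
  have hf : ContinuousOn f (Icc 0 1) := fun s hs =>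
    (h2.hasDeriv s hs).continuousAt.continuousWithinAt
  have hm : ∀ t, limsup (u t) F ≤ 0 := le_zero_of_forall_notMem_Ioo
    (continuous_limsup_comap_coord1_atBot hN hL hR hball hf hu hu01 hmono) h2.θ_mem.1
    (fun β hβ => exists_limsup_comap_coord1_atBot_lt hN hulim h4.lim0 hcl hu01 hβ)
    (limsup_comap_coord1_atBot_notMem_Ioo hN h2 hL hR hball hu hu01 hmono)
  intro t x'
  refine ⟨Tendsto.comp ?_ (tendsto_withFirst_comap_coord1 hN atBot x'),
    tendsto_withFirst_atTop_of_unifWaveLimitAtBot hN h1.cpt hulim h4.lim1 hu01 hmono t x'⟩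
  have hbdd : IsBoundedUnder (· ≤ ·) F (u t) :=
    isBoundedUnder_of_eventually_le (hcl.mono fun x hx => (hu01 t x hx).2.le)
  exact tendsto_order.2 ⟨fun a ha => hcl.mono fun x hx => ha.trans (hu01 t x hx).1,
    fun a ha => eventually_lt_of_limsup_lt ((hm t).trans_lt ha) hbdd⟩

/-- Proposition 5.5: limits of the entire solution as `x₁ → ±∞`. -/
theorem limits_in_first_coordinate
    {N : ℕ} (hN : 0 < N) (K Ω : Set (Euc N)) (hΩ : Ω = Kᶜ)
    (δ : Euc N → Euc N → ℝ) (J f f' : ℝ → ℝ) (θ : ℝ)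
    (φ φ' : ℝ → ℝ) (c : ℝ) (α : ℝ) (hα : α ∈ Set.Ioo (0:ℝ) 1)
    (h1 : C1 K δ) (h2 : C2 f f' θ) (h3 : C3 Ω J δ) (h4 : C4 N J f φ φ' c)
    (hB : MemBesov Ω δ α J) (hfJ : FJCond Ω J f' δ)
    (u : ℝ → Euc N → ℝ)
    (hu : EntireSol Ω J δ f u)
    (hu01 : StrictBetween01 Ω u)
    (hmono : TimeStrictMono Ω u)
    (hulim : UnifWaveLimitAtBot hN Ω φ c u) :
    ∀ t : ℝ, ∀ x' : Euc (N - 1),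
      Filter.Tendsto (fun s => u t (withFirst N s x')) Filter.atBot (nhds 0) ∧
      Filter.Tendsto (fun s => u t (withFirst N s x')) Filter.atTop (nhds 1) :=
  limits_in_first_coordinate_general hN K Ω hΩ δ J f f' θ φ φ' c h1 h2 h3 h4 u hu hu01 hmono hulim
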